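/- Let w ∈ ℕ, let (G,φ) be a J_w-free ordered graph, let c be a proper 3-coloring of G, and let e = uv be an edge of G with φ(u) < φ(v). Then there exists a set S ⊆ und(e) with u, v ∈ S such that for every i ∈ {1,2,3}: |S ∩ c^{-1}(i)| ≤ 27w² + 3, and every vertex x ∈ lft(e) that has a neighbor in c^{-1}(i) ∩ und(e) also has a neighbor in S ∩ c^{-1}(i). -/

import Mathlib

/-! For each colour `i`, take a minimal set `T` of `i`-coloured vertices of `und(e)` dominating
the vertices of `lft(e)` that have a neighbour among them. By minimality each `y ∈ T` has a
private neighbour `p y` in `lft(e)`, so the pairs `(p y, y)` form an induced matching. Split `T`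
by the colour of `p y`. In one part both sides are independent, and `3w + 1` pairs would give
`J_w`: among the `2w + 1` pairs with leftmost `y`, take the one whose `p y` is the median; its
edge, the other `2w` partners and the `w` remaining `y`s on the right form `J_w`. So
`|T| ≤ 9w`, and adding `u`, `v` gives at most `9w + 2 ≤ 27w² + 3` vertices of each colour. -/

/-- An ordered graph `(G, φ)` is `J_w`-free: there are no `3w + 2` vertices
`x 0, …, x (3w+1)` increasing with respect to `φ` whose only edge is between the
`(w+1)`-st and the `(2w+2)`-nd of them (zero-indexed: indices `w` and `2w+1`). -/
def JwFree {V : Type*} (G : SimpleGraph V) (φ : V → ℝ) (w : ℕ) : Prop :=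
  ¬ ∃ x : Fin (3 * w + 2) → V,
      (∀ i j : Fin (3 * w + 2), i < j → φ (x i) < φ (x j)) ∧
      ∀ i j : Fin (3 * w + 2), G.Adj (x i) (x j) ↔
        (((i : ℕ) = w ∧ (j : ℕ) = 2 * w + 1) ∨ ((j : ℕ) = w ∧ (i : ℕ) = 2 * w + 1))

open Finset

section Enumeration

variable {V β : Type*} [LinearOrder β] {φ : V → β}

lemma exists_strictMono_enum (hφ : Function.Injective φ) (S : Finset V) :
    ∃ e : Fin #S → V, StrictMono (φ ∘ e) ∧ Set.range e = S := by
  let f := (S.image φ).orderEmbOfFin (card_image_of_injective S hφ)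
  choose e heS hφe using fun i => mem_image.mp (orderEmbOfFin_mem _ _ i : f i ∈ S.image φ)
  refine ⟨e, fun i j hij => ?_, ?_⟩
  · simpa only [Function.comp_apply, hφe] using f.strictMono hij
  · ext s
    refine ⟨by rintro ⟨i, rfl⟩; exact heS i, fun hs => ?_⟩
    obtain ⟨i, hi⟩ : φ s ∈ Set.range f := by
      rw [range_orderEmbOfFin]
      exact mem_image_of_mem φ hs
    exact ⟨i, hφ (by rw [hφe, hi])⟩

variable {S : Finset V} {e : Fin #S → V}

lemma enum_mem (hrange : Set.range e = S) (i : Fin #S) : e i ∈ S := by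
  rw [← mem_coe, ← hrange]
  exact Set.mem_range_self i

lemma card_filter_lt_enum (he : StrictMono (φ ∘ e)) (hrange : Set.range e = S) (i : Fin #S) :
    #{t ∈ S | φ t < φ (e i)} = i := by
  classical
  have hfilter : {t ∈ S | φ t < φ (e i)} = (Iio i).image e := by
    ext t
    simp only [mem_filter, mem_image, mem_Iio]
    constructor
    · rintro ⟨ht, hlt⟩
      obtain ⟨j, rfl⟩ : t ∈ Set.range e := by rwa [hrange]
      exact ⟨j, he.lt_iff_lt.mp hlt, rfl⟩
    · rintro ⟨j, hj, rfl⟩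
      exact ⟨enum_mem hrange j, he hj⟩
  rw [hfilter, card_image_of_injective _ he.injective.of_comp, Fin.card_Iio]

lemma enum_eq_iff (he : StrictMono (φ ∘ e)) (hrange : Set.range e = S) {s : V} (hs : s ∈ S)
    (i : Fin #S) : e i = s ↔ (i : ℕ) = #{t ∈ S | φ t < φ s} := by
  constructor
  · rintro rfl
    exact (card_filter_lt_enum he hrange i).symm
  · intro hi
    obtain ⟨j, rfl⟩ : s ∈ Set.range e := by rwa [hrange]
    rw [card_filter_lt_enum he hrange j] at hi
    rw [Fin.ext hi]

lemma exists_mem_card_filter_lt_eq (hφ : Function.Injective φ) {k : ℕ} (hk : k < #S) :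
    ∃ a ∈ S, #{t ∈ S | φ t < φ a} = k := by
  obtain ⟨e, he, hrange⟩ := exists_strictMono_enum hφ S
  exact ⟨e ⟨k, hk⟩, enum_mem hrange _, card_filter_lt_enum he hrange _⟩

lemma exists_subsets_card_eq_of_add_le_card (hφ : Function.Injective φ) {k l : ℕ}
    (h : k + l ≤ #S) :
    ∃ Y ⊆ S, ∃ R ⊆ S, #Y = k ∧ #R = l ∧ ∀ y ∈ Y, ∀ r ∈ R, φ y < φ r := by
  classical
  obtain ⟨e, he, hrange⟩ := exists_strictMono_enum hφ S
  have hf : StrictMono (φ ∘ e ∘ Fin.castLE h) := he.comp (Fin.strictMono_castLE h)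
  have hf_inj : Function.Injective (e ∘ Fin.castLE h) := hf.injective.of_comp
  refine ⟨univ.image fun i => e (Fin.castLE h (Fin.castAdd l i)), ?_,
    univ.image fun j => e (Fin.castLE h (Fin.natAdd k j)), ?_, ?_, ?_, ?_⟩
  · exact image_subset_iff.mpr fun i _ => enum_mem hrange _
  · exact image_subset_iff.mpr fun i _ => enum_mem hrange _
  · exact (card_image_of_injective _ fun i j hij => Fin.castAdd_injective k l (hf_inj hij)).trans
      (by simp)
  · exact (card_image_of_injective _ fun i j hij => Fin.natAdd_injective l k (hf_inj hij)).trans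
      (by simp)
  · simp only [mem_image, mem_univ, true_and]
    rintro _ ⟨i, rfl⟩ _ ⟨j, rfl⟩
    exact hf (Fin.lt_def.mpr (by simp; omega))

end Enumeration

theorem SimpleGraph.exists_dominating_subset_with_private_neighbors {V : Type*}
    (G : SimpleGraph V) (A : Finset V) (X : Set V) :
    ∃ T ⊆ A, (∀ x ∈ X, (∃ y ∈ A, G.Adj x y) → ∃ y ∈ T, G.Adj x y) ∧
      ∀ y ∈ T, ∃ x ∈ X, G.Adj x y ∧ ∀ y' ∈ T, G.Adj x y' → y' = y := by
  classical
  let Dominates (T : Finset V) : Prop :=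
    ∀ x ∈ X, (∃ y ∈ A, G.Adj x y) → ∃ y ∈ T, G.Adj x y
  obtain ⟨T, hT, hmin⟩ := exists_min_image {T ∈ A.powerset | Dominates T} card
    ⟨A, mem_filter.mpr ⟨mem_powerset_self A, fun _ _ h => h⟩⟩
  obtain ⟨hTA, hdom⟩ := mem_filter.mp hT
  refine ⟨T, mem_powerset.mp hTA, hdom, fun y hy => ?_⟩
  by_contra! hpriv
  have hdom' : Dominates (T.erase y) := by
    intro x hx hxA
    obtain ⟨y₁, hy₁, hxy₁⟩ := hdom x hx hxA
    by_cases h : y₁ = y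
    · subst h
      obtain ⟨y₂, hy₂, hxy₂, hne⟩ := hpriv x hx hxy₁
      exact ⟨y₂, mem_erase.mpr ⟨hne, hy₂⟩, hxy₂⟩
    · exact ⟨y₁, mem_erase.mpr ⟨h, hy₁⟩, hxy₁⟩
  have hle := hmin (T.erase y)
    (mem_filter.mpr ⟨mem_powerset.mpr ((erase_subset y T).trans (mem_powerset.mp hTA)), hdom'⟩)
  exact (card_erase_lt_of_mem hy).not_ge hle

lemma ncard_inter_colorClass_le {V ι : Type*} {c : V → ι} (u v : V) {T : ι → Finset V}
    (hT : ∀ j, ∀ y ∈ T j, c y = j) (i : ι) :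
    (({u, v} ∪ ⋃ j, (T j : Set V)) ∩ {y | c y = i}).ncard ≤ #(T i) + 2 := by
  have hsub :
      ({u, v} ∪ ⋃ j, (T j : Set V)) ∩ {y | c y = i} ⊆ insert u (insert v ↑(T i)) := by
    rintro y ⟨(rfl | rfl) | hy, hyi⟩
    · exact Set.mem_insert _ _
    · exact Set.mem_insert_of_mem _ (Set.mem_insert _ _)
    · obtain ⟨j, hj⟩ := Set.mem_iUnion.mp hy
      obtain rfl : j = i := (hT j y hj).symm.trans hyi
      exact Set.mem_insert_of_mem _ (Set.mem_insert_of_mem _ hj)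
  calc _ ≤ (insert u (insert v (T i : Set V))).ncard := Set.ncard_le_ncard hsub (by simp)
    _ ≤ #(T i) + 2 := by grw [Set.ncard_insert_le, Set.ncard_insert_le, Set.ncard_coe_finset]

section JwFree

variable {V : Type*} {G : SimpleGraph V} {φ : V → ℝ} {w : ℕ}

/-- Listed by `φ`, the vertices of `P ∪ insert b R` form `J_w`, with `a` and `b` in positions
`w` and `2w+1`. -/
theorem not_jwFree_of_pattern [DecidableEq V] (hφ : Function.Injective φ) {P R : Finset V}
    {a b : V}
    (hP : #P = 2 * w + 1) (ha : a ∈ P) (ha_rank : #{x ∈ P | φ x < φ a} = w) (hR : #R = w)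
    (hPb : ∀ x ∈ P, φ x < φ b) (hbR : ∀ r ∈ R, φ b < φ r)
    (hP_indep : ∀ x ∈ P, ∀ y ∈ P, ¬ G.Adj x y)
    (hbR_indep : ∀ x ∈ insert b R, ∀ y ∈ insert b R, ¬ G.Adj x y)
    (hcross : ∀ x ∈ P, ∀ y ∈ insert b R, G.Adj x y ↔ x = a ∧ y = b) :
    ¬ JwFree G φ w := by
  set Q := insert b R
  have hPQ : ∀ x ∈ P, ∀ y ∈ Q, φ x < φ y := by
    intro x hx y hy
    rcases mem_insert.mp hy with rfl | hy
    · exact hPb x hx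
    · exact (hPb x hx).trans (hbR y hy)
  have hdisj : Disjoint P Q := disjoint_left.mpr fun x hx hxQ => (hPQ x hx x hxQ).false
  have haQ : a ∉ Q := disjoint_left.mp hdisj ha
  have hbP : b ∉ P := disjoint_right.mp hdisj (mem_insert_self b R)
  set S := P ∪ Q
  have hS : #S = 3 * w + 2 := by
    rw [card_union_of_disjoint hdisj, hP, card_insert_of_notMem fun hb => (hbR b hb).false, hR]
    ring
  have hadj : ∀ x ∈ S, ∀ y ∈ S, G.Adj x y ↔ (x = a ∧ y = b) ∨ (x = b ∧ y = a) := by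
    intro x hx y hy
    rcases mem_union.mp hx with hxP | hxQ <;> rcases mem_union.mp hy with hyP | hyQ
    · refine iff_of_false (hP_indep x hxP y hyP) ?_
      rintro (⟨-, rfl⟩ | ⟨rfl, -⟩) <;> contradiction
    · rw [hcross x hxP y hyQ]
      refine ⟨Or.inl, ?_⟩
      rintro (h | ⟨rfl, -⟩)
      exacts [h, absurd hxP hbP]
    · rw [G.adj_comm, hcross y hyP x hxQ]
      refine ⟨fun ⟨h₁, h₂⟩ => Or.inr ⟨h₂, h₁⟩, ?_⟩
      rintro (⟨-, rfl⟩ | ⟨h₁, h₂⟩)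
      exacts [absurd hyP hbP, ⟨h₂, h₁⟩]
    · refine iff_of_false (hbR_indep x hxQ y hyQ) ?_
      rintro (⟨rfl, -⟩ | ⟨-, rfl⟩) <;> contradiction
  have hrank_a : #{x ∈ S | φ x < φ a} = w := by
    rw [filter_union, filter_false_of_mem fun y hy => (hPQ a ha y hy).not_gt, union_empty,
      ha_rank]
  have hrank_b : #{x ∈ S | φ x < φ b} = 2 * w + 1 := by
    rw [filter_union, filter_true_of_mem hPb, filter_false_of_mem, union_empty, hP]
    intro y hy
    rcases mem_insert.mp hy with rfl | hy
    exacts [lt_irrefl _, (hbR y hy).not_gt]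
  obtain ⟨e, he, hrange⟩ := exists_strictMono_enum hφ S
  refine fun hfree => hfree ⟨e ∘ Fin.cast hS.symm, fun i j hij => he hij, fun i j => ?_⟩
  simp only [Function.comp_apply]
  rw [hadj _ (enum_mem hrange _) _ (enum_mem hrange _),
    enum_eq_iff he hrange (mem_union_left Q ha), enum_eq_iff he hrange (mem_union_left Q ha),
    enum_eq_iff he hrange (mem_union_right P (mem_insert_self b R)),
    enum_eq_iff he hrange (mem_union_right P (mem_insert_self b R)), hrank_a, hrank_b]
  simp only [Fin.val_cast]
  omega

theorem card_le_of_inducedMatching [DecidableEq V] (hφ : Function.Injective φ)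
    (hfree : JwFree G φ w)
    {T : Finset V} {p : V → V}
    (hp : ∀ y ∈ T, ∀ y' ∈ T, G.Adj (p y) y' ↔ y' = y)
    (hlt : ∀ y ∈ T, ∀ y' ∈ T, φ (p y) < φ y')
    (hT : ∀ y ∈ T, ∀ y' ∈ T, ¬ G.Adj y y')
    (hpT : ∀ y ∈ T, ∀ y' ∈ T, ¬ G.Adj (p y) (p y')) :
    #T ≤ 3 * w := by
  by_contra! hT_card
  obtain ⟨Y, hYT, R, hRT, hY, hR, hYR⟩ :=
    exists_subsets_card_eq_of_add_le_card hφ (S := T) (k := 2 * w + 1) (l := w) (by omega)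
  have hp_inj : Set.InjOn p T := fun y hy y' hy' h =>
    ((hp y' hy' y hy).mp (h ▸ (hp y hy y hy).mpr rfl))
  have hP : #(Y.image p) = 2 * w + 1 := by rw [card_image_of_injOn (hp_inj.mono hYT), hY]
  obtain ⟨_, haP, ha_rank⟩ :=
    exists_mem_card_filter_lt_eq hφ (S := Y.image p) (k := w) (by omega)
  obtain ⟨b, hbY, rfl⟩ := mem_image.mp haP
  have hbRT : insert b R ⊆ T := insert_subset (hYT hbY) hRT
  refine not_jwFree_of_pattern hφ hP haP ha_rank hR ?_ (hYR b hbY) ?_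
    (fun x hx y hy => hT x (hbRT hx) y (hbRT hy)) ?_ hfree
  · simp only [mem_image]
    rintro _ ⟨y, hy, rfl⟩
    exact hlt y (hYT hy) b (hYT hbY)
  · simp only [mem_image]
    rintro _ ⟨y, hy, rfl⟩ _ ⟨y', hy', rfl⟩
    exact hpT y (hYT hy) y' (hYT hy')
  · simp only [mem_image]
    rintro _ ⟨y, hy, rfl⟩ z hz
    rw [hp y (hYT hy) z (hbRT hz)]
    constructor
    · rintro rfl
      rcases mem_insert.mp hz with rfl | hzR
      · exact ⟨rfl, rfl⟩
      · exact absurd (hYR z hy z hzR) (lt_irrefl _)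
    · rintro ⟨h, rfl⟩
      exact (hp_inj (hYT hy) (hYT hbY) h).symm

theorem card_le_of_inducedMatching_of_coloring {ι : Type*} [Fintype ι]
    (hφ : Function.Injective φ) (hfree : JwFree G φ w)
    {c : V → ι} (hc : ∀ x y, G.Adj x y → c x ≠ c y) {T : Finset V} {p : V → V}
    (hp : ∀ y ∈ T, ∀ y' ∈ T, G.Adj (p y) y' ↔ y' = y)
    (hlt : ∀ y ∈ T, ∀ y' ∈ T, φ (p y) < φ y')
    (hT : ∀ y ∈ T, ∀ y' ∈ T, ¬ G.Adj y y') :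
    #T ≤ Fintype.card ι * (3 * w) := by
  classical
  calc #T = ∑ j, #{y ∈ T | c (p y) = j} := card_eq_sum_card_fiberwise fun y _ => mem_univ _
    _ ≤ ∑ _j : ι, 3 * w := sum_le_sum fun j _ => by
        have hsub : {y ∈ T | c (p y) = j} ⊆ T := filter_subset _ T
        refine card_le_of_inducedMatching hφ hfree
          (fun y hy y' hy' => hp y (hsub hy) y' (hsub hy'))
          (fun y hy y' hy' => hlt y (hsub hy) y' (hsub hy'))
          (fun y hy y' hy' => hT y (hsub hy) y' (hsub hy')) fun y hy y' hy' hadj => ?_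
        exact hc _ _ hadj (((mem_filter.mp hy).2).trans ((mem_filter.mp hy').2).symm)
    _ = Fintype.card ι * (3 * w) := by simp

theorem exists_dominating_subset_card_le {ι : Type*} [Fintype ι]
    (hφ : Function.Injective φ) (hfree : JwFree G φ w)
    {c : V → ι} (hc : ∀ x y, G.Adj x y → c x ≠ c y)
    {A : Finset V} (hA : ∀ y ∈ A, ∀ y' ∈ A, ¬ G.Adj y y')
    {X : Set V} (hXA : ∀ x ∈ X, ∀ y ∈ A, φ x < φ y) :
    ∃ T ⊆ A, #T ≤ Fintype.card ι * (3 * w) ∧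
      ∀ x ∈ X, (∃ y ∈ A, G.Adj x y) → ∃ y ∈ T, G.Adj x y := by
  obtain ⟨T, hTA, hdom, hpriv⟩ := G.exists_dominating_subset_with_private_neighbors A X
  choose! p hpX hpy hp_uniq using hpriv
  refine ⟨T, hTA, card_le_of_inducedMatching_of_coloring hφ hfree hc (p := p)
    (fun y hy y' hy' => ⟨hp_uniq y hy y' hy', fun h => h ▸ hpy y hy⟩)
    (fun y hy y' hy' => hXA _ (hpX y hy) y' (hTA hy'))
    (fun y hy y' hy' => hA y (hTA hy) y' (hTA hy')), hdom⟩

end JwFree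

theorem exists_small_color_dominating_set
    {V : Type*} [Fintype V] (w : ℕ) (G : SimpleGraph V) (φ : V → ℝ)
    (hφ : Function.Injective φ) (hfree : JwFree G φ w)
    (c : V → Fin 3) (hc : ∀ x y, G.Adj x y → c x ≠ c y)
    (u v : V) (hlt : φ u < φ v) :
    ∃ S : Set V,
      S ⊆ {x : V | φ u ≤ φ x ∧ φ x ≤ φ v} ∧ u ∈ S ∧ v ∈ S ∧
      ∀ i : Fin 3,
        (S ∩ {y : V | c y = i}).ncard ≤ 27 * w ^ 2 + 3 ∧
        ∀ x : V, φ x < φ u →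
          (∃ y, G.Adj x y ∧ c y = i ∧ φ u ≤ φ y ∧ φ y ≤ φ v) →
          ∃ y ∈ S, c y = i ∧ G.Adj x y := by
  classical
  let A (i : Fin 3) : Finset V := {y | (φ u ≤ φ y ∧ φ y ≤ φ v) ∧ c y = i}
  have hA (i : Fin 3) : ∀ y ∈ A i, ∀ y' ∈ A i, ¬ G.Adj y y' := fun y hy y' hy' hadj =>
    hc y y' hadj ((mem_filter.mp hy).2.2.trans (mem_filter.mp hy').2.2.symm)
  have hXA (i : Fin 3) : ∀ x ∈ {x | φ x < φ u}, ∀ y ∈ A i, φ x < φ y := fun x hx y hy =>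
    lt_of_lt_of_le hx (mem_filter.mp hy).2.1.1
  choose T hTA hT_card hT_dom using fun i =>
    exists_dominating_subset_card_le hφ hfree hc (hA i) (hXA i)
  have hTi (i : Fin 3) : ∀ y ∈ T i, (φ u ≤ φ y ∧ φ y ≤ φ v) ∧ c y = i := fun y hy =>
    (mem_filter.mp (hTA i hy)).2
  refine ⟨{u, v} ∪ ⋃ i, (T i : Set V), ?_, by simp, by simp,
    fun i => ⟨?_, fun x hx hxy => ?_⟩⟩
  · rintro x ((rfl | rfl) | hx)
    · exact ⟨le_rfl, hlt.le⟩
    · exact ⟨hlt.le, le_rfl⟩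
    · obtain ⟨i, hi⟩ := Set.mem_iUnion.mp hx
      exact (hTi i x hi).1
  · have hS := ncard_inter_colorClass_le u v (fun j y hy => (hTi j y hy).2) i
    have hT : #(T i) ≤ 3 * (3 * w) := by simpa using hT_card i
    nlinarith
  · obtain ⟨y, hyx, hyi, hy⟩ := hxy
    obtain ⟨z, hz, hxz⟩ := hT_dom i x hx ⟨y, by simp [A, hyi, hy], hyx⟩
    exact ⟨z, Or.inr (Set.mem_iUnion.mpr ⟨i, hz⟩), (hTi i z hz).2, hxz⟩
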